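/- arXiv:2204.01803 — 2 statements merged into one kernel-verified Lean document; each statement's English description precedes it below -/
import Mathlib

section
/- For all i, j ∈ {1,…,n}: E[Ĩ_{i,i}·Ĩ_{j,j}] (= Cov(Ĩ_{i,i}, Ĩ_{j,j}), since the Ĩ's are centred) equals (n−2)(n−1)(n+2)/(180n²(n+1)) if i = j, and equals −(n−2)(n+2)/(180n²(n+1)) if i ≠ j. -/
/-!
`Ĩ_{i,i} = g(R_i)` for an explicit quadratic `g` (`rankScore`). Ties have probability zero,
so almost surely the ranks are a permutation of `1, …, n`; hence `∑ i, g(R_i) = ∑ r, g(r) = 0`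
and `∑ i, g(R_i)² = ∑ r, g(r)²`, a power-sum computation. The law of `(X_1, …, X_n)` is
invariant under permutations of the coordinates, so `E[g(R_i)²]` and `E[g(R_i) g(R_j)]`
(`i ≠ j`) do not depend on the indices, and the two sums determine them:
`n E[g(R_1)²] = ∑ r, g(r)²` and `E[g(R_i)²] + (n - 1) E[g(R_i) g(R_j)] = E[g(R_i) ∑ k, g(R_k)] = 0`.
-/

open MeasureTheory ProbabilityTheory Filter Finset Topology

noncomputable section

/-- The rank `R_i` of `X_i` among `X_1, …, X_n` (as a real number). -/
def rank1 {Ω : Type} {n : ℕ} (X : Fin n → Ω → ℝ) (i : Fin n) (ω : Ω) : ℝ :=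
  ∑ j : Fin n, if X j ω ≤ X i ω then (1 : ℝ) else 0

/-- The quantity `I_{i,j}`. -/
def I1 {Ω : Type} {n : ℕ} (X : Fin n → Ω → ℝ) (i j : Fin n) (ω : Ω) : ℝ :=
  (2 * (n : ℝ) + 1) / (6 * (n : ℝ))
    + rank1 X i ω * (rank1 X i ω - 1) / (2 * (n : ℝ) * ((n : ℝ) + 1))
    + rank1 X j ω * (rank1 X j ω - 1) / (2 * (n : ℝ) * ((n : ℝ) + 1))
    - max (rank1 X i ω) (rank1 X j ω) / ((n : ℝ) + 1)

/-- The centred quantity `Ĩ_{i,j}`. -/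
def Itil1 {Ω : Type} {n : ℕ} (X : Fin n → Ω → ℝ) (i j : Fin n) (ω : Ω) : ℝ :=
  if i = j then I1 X i j ω - (1 / 6 - 1 / (6 * (n : ℝ)))
  else I1 X i j ω + 1 / (6 * (n : ℝ))

/-- The basic model assumptions: measurability, `X_1, …, X_n` are i.i.d. real-valued
random variables, and their common cdf is continuous. -/
def IID1 {Ω : Type} [MeasurableSpace Ω] {n : ℕ} (X : Fin n → Ω → ℝ)
    (P : Measure Ω) : Prop :=
  (∀ i, Measurable (X i)) ∧
  iIndepFun X P ∧
  (∀ i j : Fin n, Measure.map (X i) P = Measure.map (X j) P) ∧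
  (∀ i : Fin n, Continuous fun t : ℝ => (P {ω | X i ω ≤ t}).toReal)

lemma nullSingletonClass_of_continuous_cdf (μ : Measure ℝ) [IsProbabilityMeasure μ]
    (h : Continuous (cdf μ)) : NullSingletonClass μ where
  measure_singleton t := by
    rw [← measure_cdf μ, StieltjesFunction.measure_singleton,
      h.continuousAt.continuousWithinAt.leftLim_eq, sub_self, ENNReal.ofReal_zero]

lemma nullSingletonClass_map_of_continuous {Ω : Type*} [MeasurableSpace Ω] {P : Measure Ω}
    [IsProbabilityMeasure P] {X : Ω → ℝ} (hX : Measurable X)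
    (h : Continuous fun t => (P {ω | X ω ≤ t}).toReal) : NullSingletonClass (P.map X) := by
  have := Measure.isProbabilityMeasure_map (μ := P) hX.aemeasurable
  refine nullSingletonClass_of_continuous_cdf _ (h.congr fun t => ?_)
  rw [cdf_eq_real, measureReal_def, Measure.map_apply hX measurableSet_Iic]
  rfl

namespace ProbabilityTheory

lemma IndepFun.ae_ne {Ω β : Type*} [MeasurableSpace Ω] [MeasurableSpace β] [MeasurableEq β]
    {P : Measure Ω} [IsProbabilityMeasure P] {X Y : Ω → β}
    (hX : Measurable X) (hY : Measurable Y) [NullSingletonClass (P.map Y)]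
    (h : IndepFun X Y P) : ∀ᵐ ω ∂P, X ω ≠ Y ω := by
  have hlaw := (indepFun_iff_map_prod_eq_prod_map_map hX.aemeasurable hY.aemeasurable).1 h
  have hoff : MeasurableSet {p : β × β | p.1 ≠ p.2} := measurableSet_diagonal.compl
  have : ∀ᵐ p ∂(P.map X).prod (P.map Y), p.1 ≠ p.2 :=
    (Measure.ae_prod_iff_ae_ae hoff).2 (ae_of_all _ fun x => (P.map Y).ae_ne x |>.mono
      fun _ hy => Ne.symm hy)
  rw [← hlaw] at this
  exact ae_of_ae_map (hX.prodMk hY).aemeasurable this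

lemma iIndepFun.ae_injective {Ω ι β : Type*} [MeasurableSpace Ω] [MeasurableSpace β]
    [MeasurableEq β] [Countable ι] {P : Measure Ω} [IsProbabilityMeasure P] {X : ι → Ω → β}
    (hm : ∀ i, Measurable (X i)) (hnull : ∀ i, NullSingletonClass (P.map (X i)))
    (h : iIndepFun X P) : ∀ᵐ ω ∂P, Function.Injective fun i => X i ω := by
  have : ∀ᵐ ω ∂P, ∀ a b, a ≠ b → X a ω ≠ X b ω := by
    refine ae_all_iff.2 fun a => ae_all_iff.2 fun b => ?_
    by_cases hab : a = b
    · exact ae_of_all _ fun _ h => absurd hab h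
    · exact (IndepFun.ae_ne (hm a) (hm b) (h.indepFun hab)).mono fun _ h _ => h
  exact this.mono fun ω h a b => not_imp_not.1 (h a b)

lemma iIndepFun.identDistrib_comp_perm {Ω ι β : Type*} [MeasurableSpace Ω]
    [MeasurableSpace β] [Fintype ι] {P : Measure Ω} {X : ι → Ω → β}
    (hm : ∀ i, Measurable (X i)) (h : iIndepFun X P)
    (hident : ∀ i j, P.map (X i) = P.map (X j)) (σ : Equiv.Perm ι) :
    IdentDistrib (fun ω i => X (σ i) ω) (fun ω i => X i ω) P P where
  aemeasurable_fst := (measurable_pi_lambda _ fun i => hm (σ i)).aemeasurable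
  aemeasurable_snd := (measurable_pi_lambda _ hm).aemeasurable
  map_eq := by
    rw [(h.precomp σ.injective).map_fun_eq_pi_map fun i => (hm _).aemeasurable,
      h.map_fun_eq_pi_map fun i => (hm _).aemeasurable]
    exact congrArg Measure.pi (funext fun i => hident (σ i) i)

end ProbabilityTheory

section Rank

variable {ι α : Type*} [Fintype ι] [LinearOrder α]

def rank (x : ι → α) (i : ι) : ℕ := #{j | x j ≤ x i}

lemma rank_mem_Icc (x : ι → α) (i : ι) : rank x i ∈ Icc 1 (Fintype.card ι) :=
  mem_Icc.2 ⟨card_pos.2 ⟨i, by simp⟩, card_le_univ _⟩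

lemma rank_lt_rank (x : ι → α) {i j : ι} (h : x i < x j) : rank x i < rank x j := by
  refine card_lt_card ⟨monotone_filter_right _ fun _ _ hk => hk.trans h.le, fun hsub => ?_⟩
  have : x j ≤ x i := by simpa using hsub (by simp : j ∈ ({k | x k ≤ x j} : Finset ι))
  exact this.not_gt h

lemma rank_injective {x : ι → α} (hx : Function.Injective x) : Function.Injective (rank x) := by
  intro i j hij
  by_contra hne
  rcases (hx.ne hne).lt_or_gt with h | h
  · exact (rank_lt_rank x h).ne hij
  · exact (rank_lt_rank x h).ne' hij

lemma image_rank {x : ι → α} (hx : Function.Injective x) :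
    univ.image (rank x) = Icc 1 (Fintype.card ι) := by
  refine eq_of_subset_of_card_le (fun r hr => ?_) ?_
  · obtain ⟨i, -, rfl⟩ := mem_image.1 hr
    exact rank_mem_Icc x i
  · rw [card_image_of_injective _ (rank_injective hx), Nat.card_Icc, card_univ,
      Nat.add_sub_cancel]

lemma sum_comp_rank {M : Type*} [AddCommMonoid M] {x : ι → α} (hx : Function.Injective x)
    (f : ℕ → M) : ∑ i, f (rank x i) = ∑ k ∈ range (Fintype.card ι), f (k + 1) := by
  rw [← sum_image fun i _ j _ h => rank_injective hx h, image_rank hx,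
    ← Ico_add_one_right_eq_Icc, sum_Ico_eq_sum_range, Nat.add_sub_cancel]
  simp only [add_comm 1]

lemma rank_comp_perm (x : ι → α) (σ : Equiv.Perm ι) (i : ι) :
    rank (fun k => x (σ k)) i = rank x (σ i) := by
  simp only [rank, card_filter]
  exact Equiv.sum_comp σ fun j => if x j ≤ x (σ i) then 1 else 0

lemma measurable_rank (i : ι) : Measurable fun x : ι → ℝ => (rank x i : ℝ) := by
  simp only [rank, card_filter, Nat.cast_sum, Nat.cast_ite, Nat.cast_one, Nat.cast_zero]
  exact Finset.measurable_sum _ fun j _ => Measurable.ite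
    (measurableSet_le (measurable_pi_apply j) (measurable_pi_apply i)) measurable_const
    measurable_const

end Rank

lemma rank1_eq_rank {Ω : Type} {n : ℕ} (X : Fin n → Ω → ℝ) (i : Fin n) (ω : Ω) :
    rank1 X i ω = rank (fun k => X k ω) i := by
  rw [rank1, sum_boole, rank]

section Exchangeable

variable {Ω ι : Type*} [MeasurableSpace Ω] {P : Measure Ω} [IsProbabilityMeasure P]
  [Fintype ι] [DecidableEq ι] {G : ι → Ω → ℝ} {S : ℝ}
  (hperm : ∀ (σ : Equiv.Perm ι) (i j : ι),
    ∫ ω, G (σ i) ω * G (σ j) ω ∂P = ∫ ω, G i ω * G j ω ∂P)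
include hperm

lemma integral_mul_self_eq_of_exchangeable (hint : ∀ i, Integrable (fun ω => G i ω * G i ω) P)
    (hsq : ∀ᵐ ω ∂P, ∑ i, G i ω * G i ω = S) (i : ι) :
    ∫ ω, G i ω * G i ω ∂P = S / Fintype.card ι := by
  have hconst : ∀ k, ∫ ω, G k ω * G k ω ∂P = ∫ ω, G i ω * G i ω ∂P := fun k => by
    simpa using hperm (Equiv.swap i k) i i
  have htotal : ∑ k, ∫ ω, G k ω * G k ω ∂P = S := by
    rw [← integral_finsetSum _ fun k _ => hint k, integral_congr_ae hsq, integral_const,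
      probReal_univ, one_smul]
  rw [sum_congr rfl fun k _ => hconst k, sum_const, card_univ, nsmul_eq_mul] at htotal
  have : (Fintype.card ι : ℝ) ≠ 0 := Nat.cast_ne_zero.2 (Fintype.card_pos_iff.2 ⟨i⟩).ne'
  rw [← htotal]
  field_simp

lemma integral_mul_eq_of_exchangeable (hint : ∀ i j, Integrable (fun ω => G i ω * G j ω) P)
    (hsum : ∀ᵐ ω ∂P, ∑ i, G i ω = 0) (hsq : ∀ᵐ ω ∂P, ∑ i, G i ω * G i ω = S)
    {i j : ι} (hij : i ≠ j) :
    ∫ ω, G i ω * G j ω ∂P = -(S / (Fintype.card ι * (Fintype.card ι - 1))) := by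
  have hconst : ∀ k ∈ univ.erase i, ∫ ω, G i ω * G k ω ∂P = ∫ ω, G i ω * G j ω ∂P :=
    fun k hk => by
      simpa [Equiv.swap_apply_of_ne_of_ne hij (ne_of_mem_erase hk).symm] using
        hperm (Equiv.swap j k) i j
  have hrow : ∑ k, ∫ ω, G i ω * G k ω ∂P = 0 := by
    rw [← integral_finsetSum _ fun k _ => hint i k]
    refine (integral_congr_ae (hsum.mono fun ω h => ?_)).trans (integral_zero Ω ℝ)
    simp only [← mul_sum, h, mul_zero]
  rw [← add_sum_erase _ _ (mem_univ i), sum_congr rfl hconst, sum_const,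
    card_erase_of_mem (mem_univ i), card_univ, nsmul_eq_mul,
    integral_mul_self_eq_of_exchangeable hperm (fun k => hint k k) hsq i] at hrow
  have hcard : 1 < Fintype.card ι := Fintype.one_lt_card_iff.2 ⟨i, j, hij⟩
  have hcard' : (Fintype.card ι : ℝ) - 1 ≠ 0 :=
    sub_ne_zero.2 (Nat.one_lt_cast.2 hcard).ne'
  have : (Fintype.card ι : ℝ) ≠ 0 := Nat.cast_ne_zero.2 (by omega)
  rw [Nat.cast_sub hcard.le, Nat.cast_one] at hrow
  field_simp at hrow ⊢
  linarith

end Exchangeable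

lemma sum_range_cast (m : ℕ) : ∑ k ∈ range m, (k : ℝ) = m * (m - 1) / 2 := by
  induction m with
  | zero => simp
  | succ m ih => rw [sum_range_succ, ih]; push_cast; ring

lemma sum_range_cast_sq (m : ℕ) :
    ∑ k ∈ range m, (k : ℝ) ^ 2 = m * (m - 1) * (2 * m - 1) / 6 := by
  induction m with
  | zero => simp
  | succ m ih => rw [sum_range_succ, ih]; push_cast; ring

lemma sum_range_cast_pow_three (m : ℕ) :
    ∑ k ∈ range m, (k : ℝ) ^ 3 = (m * (m - 1) / 2) ^ 2 := by
  induction m with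
  | zero => simp
  | succ m ih => rw [sum_range_succ, ih]; push_cast; ring

lemma sum_range_cast_pow_four (m : ℕ) :
    ∑ k ∈ range m, (k : ℝ) ^ 4 =
      m * (m - 1) * (2 * m - 1) * (3 * m ^ 2 - 3 * m - 1) / 30 := by
  induction m with
  | zero => simp
  | succ m ih => rw [sum_range_succ, ih]; push_cast; ring

/-- `Ĩ_{i,i}` as a function of the rank `r = R_i`. -/
def rankScore (n : ℕ) (r : ℝ) : ℝ :=
  ((n : ℝ) + 2) / (6 * n) + r * (r - 1 - n) / (n * (n + 1))

lemma Itil1_self_eq_rankScore {Ω : Type} {n : ℕ} (X : Fin n → Ω → ℝ) (i : Fin n) (ω : Ω) :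
    Itil1 X i i ω = rankScore n (rank (fun k => X k ω) i) := by
  have : (n : ℝ) ≠ 0 := Nat.cast_ne_zero.2 i.pos.ne'
  simp only [Itil1, I1, ↓reduceIte, max_self, rank1_eq_rank, rankScore]
  field_simp
  ring

lemma sum_range_rankScore (n : ℕ) : ∑ k ∈ range n, rankScore n (k + 1) = 0 := by
  obtain rfl | hn := eq_or_ne n 0
  · simp
  have key : ∀ k : ℝ, rankScore n (k + 1) =
      (((n : ℝ) + 1) * (n + 2) / 6 - n + (1 - n) * k + k ^ 2) / (n * (n + 1)) := by
    intro k; unfold rankScore; field_simp; ring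
  simp only [key, ← sum_div, sum_add_distrib, ← mul_sum, sum_const, card_range, nsmul_eq_mul,
    sum_range_cast, sum_range_cast_sq]
  field_simp
  ring

lemma sum_range_rankScore_sq (n : ℕ) :
    ∑ k ∈ range n, rankScore n (k + 1) ^ 2 =
      ((n : ℝ) - 1) * (n - 2) * (n + 2) / (180 * n * (n + 1)) := by
  obtain rfl | hn := eq_or_ne n 0
  · simp
  set a : ℝ := ((n : ℝ) + 1) * (n + 2) / 6 - n
  have key : ∀ k : ℝ, rankScore n (k + 1) ^ 2 =
      (a ^ 2 + 2 * (1 - n) * a * k + ((1 - n) ^ 2 + 2 * a) * k ^ 2 + 2 * (1 - n) * k ^ 3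
        + k ^ 4) / (n * (n + 1)) ^ 2 := by
    intro k; unfold rankScore a; field_simp; ring
  simp only [key, ← sum_div, sum_add_distrib, ← mul_sum, sum_const, card_range, nsmul_eq_mul,
    sum_range_cast, sum_range_cast_sq, sum_range_cast_pow_three, sum_range_cast_pow_four, a]
  field_simp
  ring

lemma abs_rankScore_le_one {n : ℕ} {r : ℝ} (hr : 1 ≤ r) (hrn : r ≤ n) :
    |rankScore n r| ≤ 1 := by
  have hn : (1 : ℝ) ≤ n := hr.trans hrn
  have hd : (0 : ℝ) < 6 * n * (n + 1) := by positivity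
  have : rankScore n r =
      (((n : ℝ) + 2) * (n + 1) + 6 * r * (r - 1 - n)) / (6 * n * (n + 1)) := by
    unfold rankScore; field_simp
  rw [this, abs_le, le_div_iff₀ hd, div_le_iff₀ hd]
  constructor <;> nlinarith

section RankScoreOfIID

variable {Ω : Type*} [MeasurableSpace Ω] {P : Measure Ω} {n : ℕ} {X : Fin n → Ω → ℝ}

lemma measurable_rankScore_mul_rankScore (i j : Fin n) :
    Measurable fun x : Fin n → ℝ => rankScore n (rank x i) * rankScore n (rank x j) := by
  unfold rankScore
  have := measurable_rank (ι := Fin n) i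
  have := measurable_rank (ι := Fin n) j
  fun_prop

lemma integrable_rankScore_mul_rankScore [IsFiniteMeasure P] (hm : ∀ i, Measurable (X i))
    (i j : Fin n) :
    Integrable (fun ω => rankScore n (rank (fun k => X k ω) i) *
      rankScore n (rank (fun k => X k ω) j)) P := by
  have hbound (l : Fin n) (x : Fin n → ℝ) : |rankScore n (rank x l)| ≤ 1 := by
    have := mem_Icc.1 (rank_mem_Icc x l)
    rw [Fintype.card_fin] at this
    exact abs_rankScore_le_one (by exact_mod_cast this.1) (by exact_mod_cast this.2)
  refine Integrable.of_bound ((measurable_rankScore_mul_rankScore i j).comp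
    (measurable_pi_lambda _ hm)).aestronglyMeasurable 1 (ae_of_all _ fun ω => ?_)
  rw [Real.norm_eq_abs, abs_mul]
  exact mul_le_one₀ (hbound i _) (abs_nonneg _) (hbound j _)

lemma integral_rankScore_mul_rankScore_comp_perm (hm : ∀ i, Measurable (X i))
    (hind : iIndepFun X P) (hident : ∀ i j, P.map (X i) = P.map (X j))
    (σ : Equiv.Perm (Fin n)) (i j : Fin n) :
    ∫ ω, rankScore n (rank (fun k => X k ω) (σ i)) *
        rankScore n (rank (fun k => X k ω) (σ j)) ∂P =
      ∫ ω, rankScore n (rank (fun k => X k ω) i) * rankScore n (rank (fun k => X k ω) j) ∂P := by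
  simp_rw [← rank_comp_perm]
  exact ((hind.identDistrib_comp_perm hm hident σ).comp
    (measurable_rankScore_mul_rankScore i j)).integral_eq

end RankScoreOfIID

lemma sum_rankScore_rank {n : ℕ} {x : Fin n → ℝ} (hx : Function.Injective x) :
    ∑ i, rankScore n (rank x i) = 0 := by
  rw [sum_comp_rank hx (fun r => rankScore n r), Fintype.card_fin]
  push_cast
  exact sum_range_rankScore n

lemma sum_rankScore_rank_mul_self {n : ℕ} {x : Fin n → ℝ} (hx : Function.Injective x) :
    ∑ i, rankScore n (rank x i) * rankScore n (rank x i) =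
      ((n : ℝ) - 1) * (n - 2) * (n + 2) / (180 * n * (n + 1)) := by
  rw [sum_comp_rank hx (fun r => rankScore n r * rankScore n r), Fintype.card_fin]
  push_cast
  simpa only [sq] using sum_range_rankScore_sq n

theorem stmt_12_general
    (n : ℕ)
    (Ω : Type) [MeasurableSpace Ω]
    (P : Measure Ω) [IsProbabilityMeasure P]
    (X : Fin n → Ω → ℝ) (hX : IID1 X P) :
    ∀ i j : Fin n,
      ∫ ω, Itil1 X i i ω * Itil1 X j j ω ∂ P =
        if i = j then
          ((n : ℝ) - 2) * ((n : ℝ) - 1) * ((n : ℝ) + 2) /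
            (180 * (n : ℝ) ^ 2 * ((n : ℝ) + 1))
        else
          -(((n : ℝ) - 2) * ((n : ℝ) + 2) /
            (180 * (n : ℝ) ^ 2 * ((n : ℝ) + 1))) := by
  obtain ⟨hm, hind, hident, hcdf⟩ := hX
  have hinj : ∀ᵐ ω ∂P, Function.Injective fun k => X k ω :=
    hind.ae_injective hm fun i => nullSingletonClass_map_of_continuous (hm i) (hcdf i)
  have hsum := hinj.mono fun _ => sum_rankScore_rank
  have hsq := hinj.mono fun _ => sum_rankScore_rank_mul_self
  have hperm := integral_rankScore_mul_rankScore_comp_perm hm hind hident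
  have hint := integrable_rankScore_mul_rankScore (P := P) hm
  intro i j
  have hn : (n : ℝ) ≠ 0 := Nat.cast_ne_zero.2 i.pos.ne'
  simp only [Itil1_self_eq_rankScore]
  split_ifs with hij
  · subst hij
    rw [integral_mul_self_eq_of_exchangeable hperm (fun k => hint k k) hsq i, Fintype.card_fin]
    field_simp
  · have hn1 : (n : ℝ) - 1 ≠ 0 := sub_ne_zero.2 (Nat.one_lt_cast.2
      (Fintype.card_fin n ▸ Fintype.one_lt_card_iff.2 ⟨i, j, hij⟩)).ne'
    rw [integral_mul_eq_of_exchangeable hperm hint hsum hsq hij, Fintype.card_fin]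
    field_simp

/-- For all `i, j ∈ {1,…,n}`: `E[Ĩ_{i,i}·Ĩ_{j,j}]` equals
`(n−2)(n−1)(n+2)/(180n²(n+1))` if `i = j`, and `−(n−2)(n+2)/(180n²(n+1))` if `i ≠ j`. -/
theorem stmt_12
    (n : ℕ) (hn : 2 ≤ n)
    (Ω : Type) [MeasurableSpace Ω]
    (P : Measure Ω) [IsProbabilityMeasure P]
    (X : Fin n → Ω → ℝ) (hX : IID1 X P) :
    ∀ i j : Fin n,
      ∫ ω, Itil1 X i i ω * Itil1 X j j ω ∂ P =
        if i = j then
          ((n : ℝ) - 2) * ((n : ℝ) - 1) * ((n : ℝ) + 2) /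
            (180 * (n : ℝ) ^ 2 * ((n : ℝ) + 1))
        else
          -(((n : ℝ) - 2) * ((n : ℝ) + 2) /
            (180 * (n : ℝ) ^ 2 * ((n : ℝ) + 1))) :=
  stmt_12_general n Ω P X hX
end
end

section
/- Let d, k ∈ ℕ with k ≥ 2 and let λ ∈ {0,…,k−1}. Say that a quadruple P = (p^{(1)}, p^{(2)}, p^{(3)}, p^{(4)}) ∈ P(d,k)⁴ satisfies the 2-matching condition if for every ℓ ∈ {1,…,k−1} and every i ∈ {1,…,4} there exists a pair (ℓ', j) ≠ (ℓ, i) with ℓ' ∈ {1,…,k−1} and j ∈ {1,…,4} such that p^{(i)}_ℓ = p^{(j)}_{ℓ'}. Let W_k(λ) be the set of quadruples P ∈ P(d,k)⁴ satisfying the 2-matching condition with p^{(1)}_k = p^{(2)}_k < p^{(3)}_k = p^{(4)}_k and such that the set of all entries {p^{(i)}_ℓ : 1 ≤ ℓ ≤ k, 1 ≤ i ≤ 4} has exactly 2k−λ elements, and let U_k(λ) be the set of quadruples P ∈ P(d,k)⁴ satisfying the 2-matching condition with p^{(1)}_k = p^{(2)}_k = p^{(3)}_k = p^{(4)}_k and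 whose set of all entries has exactly 2k−1−λ elements. Then there are injections from W_k(λ) into P(d, 2k−λ) × {0,1}^{8k} and from U_k(λ) into P(d, 2k−1−λ) × {0,1}^{8k}; consequently |W_k(λ)| ≤ 256^k · C(d, 2k−λ) and |U_k(λ)| ≤ 256^k · C(d, 2k−1−λ). -/
/-!
A quadruple is determined by its entry set `E` together with, for each `i`, the set of positions
in `E` occupied by the entries of `p^{(i)}`, since a strictly increasing tuple is determined by its
range. When `|E| = m ≤ 2k` this gives at most `C(d, m) · 2^{4m} ≤ 256^k · C(d, m)` quadruples,
and a set of that size injects into `P(d, m) × {0,1}^{8k}`, which has exactly that many elements.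
-/

open Finset

/-- `P(a, b)`, with entries in `Fin a`, i.e. shifted down by one. -/
def IncTup (a b : ℕ) : Type := {f : Fin b → Fin a // StrictMono f}

def lastEntry {a b : ℕ} (hb : 0 < b) (f : IncTup a b) : Fin a :=
  f.1 ⟨b - 1, by omega⟩

def TwoMatching {d k : ℕ} (P : Fin 4 → IncTup d k) : Prop :=
  ∀ (ℓ : Fin (k - 1)) (i : Fin 4), ∃ (ℓ' : Fin (k - 1)) (j : Fin 4),
    (ℓ', j) ≠ (ℓ, i) ∧
      (P i).1 (Fin.castLE (Nat.sub_le k 1) ℓ) = (P j).1 (Fin.castLE (Nat.sub_le k 1) ℓ')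

def entriesSet {d k : ℕ} (P : Fin 4 → IncTup d k) : Finset (Fin d) :=
  Finset.univ.biUnion fun i : Fin 4 => Finset.univ.image (P i).1

/-- `W_k(λ)`. -/
def Wset (d k lam : ℕ) (hk : 0 < k) : Set (Fin 4 → IncTup d k) :=
  {P | TwoMatching P ∧
    lastEntry hk (P 0) = lastEntry hk (P 1) ∧
    lastEntry hk (P 1) < lastEntry hk (P 2) ∧
    lastEntry hk (P 2) = lastEntry hk (P 3) ∧
    (entriesSet P).card = 2 * k - lam}

/-- `U_k(λ)`. -/
def Uset (d k lam : ℕ) (hk : 0 < k) : Set (Fin 4 → IncTup d k) :=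
  {P | TwoMatching P ∧
    lastEntry hk (P 0) = lastEntry hk (P 1) ∧
    lastEntry hk (P 1) = lastEntry hk (P 2) ∧
    lastEntry hk (P 2) = lastEntry hk (P 3) ∧
    (entriesSet P).card = 2 * k - 1 - lam}

lemma exists_injective_of_natCard_le {α β : Type*} [Finite α] [Finite β]
    (h : Nat.card α ≤ Nat.card β) : ∃ f : α → β, Function.Injective f := by
  cases nonempty_fintype α
  cases nonempty_fintype β
  rw [Nat.card_eq_fintype_card, Nat.card_eq_fintype_card] at h
  obtain ⟨f⟩ := Function.Embedding.nonempty_of_card_le h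
  exact ⟨f, f.injective⟩

lemma Finset.map_filter_orderEmbOfFin_mem {α : Type*} [LinearOrder α] {m : ℕ} {E s : Finset α}
    (h : E.card = m) (hs : s ⊆ E) :
    (univ.filter fun t => E.orderEmbOfFin h t ∈ s).map (E.orderEmbOfFin h).toEmbedding = s := by
  ext x
  simp only [mem_map, mem_filter, mem_univ, true_and, RelEmbedding.coe_toEmbedding]
  refine ⟨fun ⟨t, ht, hx⟩ => hx ▸ ht, fun hx => ?_⟩
  obtain ⟨t, rfl⟩ : x ∈ Set.range (E.orderEmbOfFin h) := by
    rw [range_orderEmbOfFin]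
    exact hs hx
  exact ⟨t, hx, rfl⟩

namespace IncTup

def equivFinsetCard (a b : ℕ) : IncTup a b ≃ {s : Finset (Fin a) // s.card = b} where
  toFun f := ⟨univ.image f.1, by
    rw [card_image_of_injective _ f.2.injective, card_univ, Fintype.card_fin]⟩
  invFun s := ⟨s.1.orderEmbOfFin s.2, (s.1.orderEmbOfFin s.2).strictMono⟩
  left_inv f :=
    Subtype.ext (orderEmbOfFin_unique _ (fun x => mem_image_of_mem _ (mem_univ x)) f.2).symm
  right_inv s := Subtype.ext (image_orderEmbOfFin_univ _ _)

instance (a b : ℕ) : Finite (IncTup a b) :=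
  Finite.of_equiv _ (equivFinsetCard a b).symm

lemma natCard_eq_choose (a b : ℕ) : Nat.card (IncTup a b) = a.choose b := by
  rw [Nat.card_congr (equivFinsetCard a b), Nat.card_eq_fintype_card, Fintype.card_finset_len,
    Fintype.card_fin]

end IncTup

section EntryCode

variable {d k m : ℕ}

noncomputable def entryCode (P : {P : Fin 4 → IncTup d k // (entriesSet P).card = m}) :
    {s : Finset (Fin d) // s.card = m} × (Fin 4 → Finset (Fin m)) :=
  (⟨entriesSet P.1, P.2⟩,
    fun i => univ.filter fun t => (entriesSet P.1).orderEmbOfFin P.2 t ∈ univ.image (P.1 i).1)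

lemma entryCode_injective : Function.Injective (entryCode (d := d) (k := k) (m := m)) := by
  have decode : ∀ (P : {P : Fin 4 → IncTup d k // (entriesSet P).card = m}) i,
      univ.image (P.1 i).1 =
        ((entryCode P).2 i).map ((entryCode P).1.1.orderEmbOfFin (entryCode P).1.2).toEmbedding :=
    fun P i => (map_filter_orderEmbOfFin_mem P.2
      (subset_biUnion_of_mem (fun j => univ.image (P.1 j).1) (mem_univ i))).symm
  intro P Q h
  refine Subtype.ext (funext fun i => Subtype.ext <| ((P.1 i).2.range_inj (Q.1 i).2).1 ?_)
  have hrange := congrArg ((↑) : Finset (Fin d) → Set (Fin d))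
    ((decode P i).trans (h ▸ (decode Q i).symm))
  simpa using hrange

lemma natCard_le_of_forall_card_entriesSet_eq {S : Set (Fin 4 → IncTup d k)}
    (hS : ∀ P ∈ S, (entriesSet P).card = m) (hm : m ≤ 2 * k) :
    Nat.card S ≤ 256 ^ k * d.choose m := by
  calc Nat.card S
      ≤ Nat.card {P : Fin 4 → IncTup d k // (entriesSet P).card = m} :=
        Nat.card_le_card_of_injective _ (Subtype.impEmbedding _ _ hS).injective
    _ ≤ Nat.card ({s : Finset (Fin d) // s.card = m} × (Fin 4 → Finset (Fin m))) :=
        Nat.card_le_card_of_injective _ entryCode_injective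
    _ = d.choose m * 2 ^ (m * 4) := by
        simp [Nat.card_eq_fintype_card, Fintype.card_finset_len, Fintype.card_finset, pow_mul]
    _ ≤ d.choose m * 2 ^ (8 * k) :=
        Nat.mul_le_mul_left _ (Nat.pow_le_pow_right two_pos (by omega))
    _ = 256 ^ k * d.choose m := by
        rw [pow_mul, mul_comm]
        norm_num

end EntryCode

lemma natCard_incTup_prod_bits (d k m : ℕ) :
    Nat.card (IncTup d m × (Fin (8 * k) → Bool)) = 256 ^ k * d.choose m := by
  rw [Nat.card_prod, IncTup.natCard_eq_choose, Nat.card_fun, Nat.card_eq_fintype_card,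
    Nat.card_eq_fintype_card, Fintype.card_bool, Fintype.card_fin, pow_mul, mul_comm]
  norm_num

/-- For `k ≥ 2` and `0 ≤ λ ≤ k−1` there are injections from `W_k(λ)`
into `P(d, 2k−λ) × {0,1}^{8k}` and from `U_k(λ)` into `P(d, 2k−1−λ) × {0,1}^{8k}`;
consequently `|W_k(λ)| ≤ 256^k · C(d, 2k−λ)` and `|U_k(λ)| ≤ 256^k · C(d, 2k−1−λ)`. -/
theorem stmt_19 (d k lam : ℕ) (hk : 2 ≤ k) :
    (∃ f : ↥(Wset d k lam (by omega)) →
        IncTup d (2 * k - lam) × (Fin (8 * k) → Bool), Function.Injective f) ∧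
    (∃ g : ↥(Uset d k lam (by omega)) →
        IncTup d (2 * k - 1 - lam) × (Fin (8 * k) → Bool), Function.Injective g) ∧
    Nat.card ↥(Wset d k lam (by omega)) ≤ 256 ^ k * d.choose (2 * k - lam) ∧
    Nat.card ↥(Uset d k lam (by omega)) ≤ 256 ^ k * d.choose (2 * k - 1 - lam) := by
  have hW := natCard_le_of_forall_card_entriesSet_eq
    (S := Wset d k lam (by omega)) (fun _ hP => hP.2.2.2.2) (by omega)
  have hU := natCard_le_of_forall_card_entriesSet_eq
    (S := Uset d k lam (by omega)) (fun _ hP => hP.2.2.2.2) (by omega)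
  refine ⟨exists_injective_of_natCard_le ?_, exists_injective_of_natCard_le ?_, hW, hU⟩
  · rwa [natCard_incTup_prod_bits]
  · rwa [natCard_incTup_prod_bits]
end
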